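/- arXiv:1905.06003 — 2 statements merged into one kernel-verified Lean document; each statement's English description precedes it below -/
import Mathlib

section
/- Let n and m be integers with n ≥ 0 and m ≥ 1, let t be a real number, and let Z be a real-valued random variable with E(Z) = 0 and |Z| ≤ 1 almost surely. Then E(H_{n, m-1}(t - 2Z)) ≤ H_{n, m}(t). -/
open MeasureTheory Filter

/-- `Ib n m = Σ_{z=0}^{n} ((1 + (-1)^{n-z}) / 2^m) · m!/(z!(m-z)!)`, empty sum for `n < 0`. -/
noncomputable def Ib (n : ℤ) (m : ℕ) : ℝ :=
  ∑ z ∈ Finset.range (n + 1).toNat,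
    ((1 + (-1 : ℝ) ^ (n.toNat - z)) / 2 ^ m) * (m.choose z)

lemma Ib_neg {n : ℤ} (h : n < 0) (m : ℕ) : Ib n m = 0 := by
  unfold Ib
  have : (n+1).toNat = 0 := by omega
  rw [this]; simp

/-- Pascal recursion for Ib. -/
lemma Ib_rec (k : ℤ) (M : ℕ) (hM : 1 ≤ M) :
    Ib k M = (Ib k (M - 1) + Ib (k - 1) (M - 1)) / 2 := by
  rcases lt_or_ge k 0 with hk | hk
  · rw [Ib_neg hk, Ib_neg hk, Ib_neg (by omega), add_zero, zero_div]
  obtain ⟨M', rfl⟩ : ∃ M', M = M' + 1 := ⟨M - 1, by omega⟩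
  obtain ⟨K, rfl⟩ : ∃ K : ℕ, k = (K : ℤ) := ⟨k.toNat, by omega⟩
  simp only [Nat.add_sub_cancel]
  have hK1 : ((K:ℤ) + 1).toNat = K + 1 := by omega
  have hK2 : ((K:ℤ) - 1 + 1).toNat = K := by omega
  have hKt : ((K:ℤ)).toNat = K := by omega
  have hKt2 : ((K:ℤ) - 1).toNat = K - 1 := by omega
  unfold Ib
  rw [hK1, hK2, hKt, hKt2]
  -- expand Pascal on the LHS
  have pascal : ∀ z, z < K → (M' + 1).choose (z+1) = M'.choose z + M'.choose (z+1) := by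
    intro z _; rw [Nat.choose_succ_succ]
  rw [Finset.sum_range_succ' (fun z => ((1 + (-1 : ℝ) ^ (K - z)) / 2 ^ (M'+1)) * ((M'+1).choose z)) K]
  rw [Finset.sum_range_succ' (fun z => ((1 + (-1 : ℝ) ^ (K - z)) / 2 ^ M') * (M'.choose z)) K]
  have step : ∀ z ∈ Finset.range K,
      ((1 + (-1 : ℝ) ^ (K - (z+1))) / 2 ^ (M'+1)) * ((M'+1).choose (z+1))
      = ((1 + (-1 : ℝ) ^ (K - (z+1))) / 2 ^ (M'+1)) * (M'.choose (z+1))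
        + ((1 + (-1 : ℝ) ^ (K - (z+1))) / 2 ^ (M'+1)) * (M'.choose z) := by
    intro z hz
    rw [Nat.choose_succ_succ]
    push_cast
    ring
  rw [Finset.sum_congr rfl step, Finset.sum_add_distrib]
  have h1 : ∑ z ∈ Finset.range K, ((1 + (-1 : ℝ) ^ (K - (z+1))) / 2 ^ (M'+1)) * (M'.choose (z+1))
      = (∑ z ∈ Finset.range K, ((1 + (-1 : ℝ) ^ (K - (z+1))) / 2 ^ M') * (M'.choose (z+1))) / 2 := by
    rw [Finset.sum_div]
    refine Finset.sum_congr rfl fun z hz => ?_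
    rw [pow_succ]; ring
  have h2 : ∑ z ∈ Finset.range K, ((1 + (-1 : ℝ) ^ (K - (z+1))) / 2 ^ (M'+1)) * (M'.choose z)
      = (∑ z ∈ Finset.range K, ((1 + (-1 : ℝ) ^ (K - 1 - z)) / 2 ^ M') * (M'.choose z)) / 2 := by
    rw [Finset.sum_div]
    refine Finset.sum_congr rfl fun z hz => ?_
    simp only [Finset.mem_range] at hz
    have : K - (z+1) = K - 1 - z := by omega
    rw [this, pow_succ]; ring
  rw [h1, h2]
  have h0 : ((1 + (-1 : ℝ) ^ (K - 0)) / 2 ^ (M'+1)) * ((M'+1).choose 0)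
      = (((1 + (-1 : ℝ) ^ (K - 0)) / 2 ^ M') * (M'.choose 0)) / 2 := by
    simp [pow_succ]; ring
  rw [h0]
  ring

/-- companion: sum of two adjacent Ib's. -/
lemma Ib_pair (K : ℕ) (M : ℕ) :
    Ib K M + Ib ((K:ℤ) - 1) M
      = (2 / 2 ^ M) * ∑ z ∈ Finset.range (K + 1), (M.choose z : ℝ) := by
  unfold Ib
  have hK1 : ((K:ℤ) + 1).toNat = K + 1 := by omega
  have hK2 : ((K:ℤ) - 1 + 1).toNat = K := by omega
  have hKt : ((K:ℤ)).toNat = K := by omega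
  have hKt2 : ((K:ℤ) - 1).toNat = K - 1 := by omega
  rw [hK1, hK2, hKt, hKt2]
  rw [Finset.sum_range_succ (fun z => ((1 + (-1 : ℝ) ^ (K - z)) / 2 ^ M) * (M.choose z)) K]
  rw [Finset.mul_sum, Finset.sum_range_succ]
  have : ∑ z ∈ Finset.range K, ((1 + (-1 : ℝ) ^ (K - z)) / 2 ^ M) * (M.choose z)
      + ∑ z ∈ Finset.range K, ((1 + (-1 : ℝ) ^ (K - 1 - z)) / 2 ^ M) * (M.choose z)
      = ∑ z ∈ Finset.range K, (2 / 2 ^ M) * (M.choose z : ℝ) := by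
    rw [← Finset.sum_add_distrib]
    refine Finset.sum_congr rfl fun z hz => ?_
    simp only [Finset.mem_range] at hz
    have hsign : ((-1:ℝ)) ^ (K - z) + (-1) ^ (K - 1 - z) = 0 := by
      have : K - z = (K - 1 - z) + 1 := by omega
      rw [this, pow_succ]; ring
    have expand : ((1 + (-1 : ℝ) ^ (K - z)) / 2 ^ M) * (M.choose z)
        + ((1 + (-1 : ℝ) ^ (K - 1 - z)) / 2 ^ M) * (M.choose z)
        = ((2 + ((-1:ℝ)^(K-z) + (-1)^(K-1-z))) / 2 ^ M) * (M.choose z) := by ring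
    rw [expand, hsign]; ring
  rw [add_right_comm, this]
  have : K - K = 0 := Nat.sub_self K
  rw [this]
  simp only [pow_zero]
  ring

/-- `Ib a (2a+2) = 1/2`. -/
lemma Ib_half (a : ℕ) : Ib a (2 * a + 2) = 1 / 2 := by
  have h := Ib_rec a (2 * a + 2) (by omega)
  have e : 2 * a + 2 - 1 = 2 * a + 1 := by omega
  rw [e] at h
  rw [h]
  have h2 := Ib_pair a (2 * a + 1)
  rw [h2]
  have hs : (∑ z ∈ Finset.range (a+1), ((2*a+1).choose z : ℝ)) = 4 ^ a := by
    have := Nat.sum_range_choose_halfway a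
    exact_mod_cast congrArg (Nat.cast : ℕ → ℝ) this
  rw [hs]
  have h4 : ((4:ℝ)) ^ a = 2 ^ (2*a) := by
    rw [pow_mul]; norm_num
  rw [h4, pow_succ]
  have : (0:ℝ) < 2 ^ (2*a) := by positivity
  field_simp

/-- The function `G(x, y, m)` of the paper. -/
noncomputable def Gfun (x y m : ℕ) : ℝ :=
  if x = 0 ∧ y = 0 then 1 else
    ∑ n ∈ Finset.range (m / (2 * (x + y)) + 1),
      (2 * Ib (((m : ℤ) - x) / 2 - ((x : ℤ) + y) * n) (2 * (((m : ℤ) - x) / 2) + x + 2).toNat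
       - 2 * Ib (((m : ℤ) - x) / 2 - y - ((x : ℤ) + y) * n) (2 * (((m : ℤ) - x) / 2) + x + 2).toNat
       + 2 * Ib (((m : ℤ) - y) / 2 - ((x : ℤ) + y) * n) (2 * (((m : ℤ) - y) / 2) + y + 2).toNat
       - 2 * Ib (((m : ℤ) - y) / 2 - x - ((x : ℤ) + y) * n) (2 * (((m : ℤ) - y) / 2) + y + 2).toNat)

noncomputable def Gterm (x y m n : ℕ) : ℝ :=
  2 * Ib (((m : ℤ) - x) / 2 - ((x : ℤ) + y) * n) (2 * (((m : ℤ) - x) / 2) + x + 2).toNat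
   - 2 * Ib (((m : ℤ) - x) / 2 - y - ((x : ℤ) + y) * n) (2 * (((m : ℤ) - x) / 2) + x + 2).toNat
   + 2 * Ib (((m : ℤ) - y) / 2 - ((x : ℤ) + y) * n) (2 * (((m : ℤ) - y) / 2) + y + 2).toNat
   - 2 * Ib (((m : ℤ) - y) / 2 - x - ((x : ℤ) + y) * n) (2 * (((m : ℤ) - y) / 2) + y + 2).toNat

lemma Gfun_eq_sum (x y m : ℕ) (h : ¬(x = 0 ∧ y = 0)) :
    Gfun x y m = ∑ n ∈ Finset.range (m / (2 * (x + y)) + 1), Gterm x y m n := by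
  unfold Gfun Gterm
  rw [if_neg h]

lemma nat_div_key {x y m n : ℕ} (hp : 1 ≤ x + y) (hn : m / (2 * (x + y)) + 1 ≤ n) :
    m + 1 ≤ 2 * (x + y) * n := by
  set p := x + y with hpdef
  set q := m / (2 * p) with hq
  have hmod : 2 * p * q + m % (2 * p) = m := Nat.div_add_mod m (2 * p)
  have hlt : m % (2 * p) < 2 * p := Nat.mod_lt _ (by omega)
  calc m + 1 = 2 * p * q + m % (2 * p) + 1 := by rw [hmod]
    _ ≤ 2 * p * q + 2 * p := by omega
    _ = 2 * p * (q + 1) := by ring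
    _ ≤ 2 * p * n := Nat.mul_le_mul_left _ (by omega)

lemma Gterm_vanish {x y m n : ℕ} (h : ¬(x = 0 ∧ y = 0)) (hn : m / (2 * (x + y)) + 1 ≤ n) :
    Gterm x y m n = 0 := by
  have hp : 1 ≤ x + y := by omega
  have hkey : m + 1 ≤ 2 * (x + y) * n := nat_div_key hp hn
  set c : ℤ := ((x : ℤ) + y) * n with hcdef
  have hc : (m : ℤ) + 1 ≤ 2 * c := by rw [hcdef, ← mul_assoc]; exact_mod_cast hkey
  have hx : (0:ℤ) ≤ x := Int.ofNat_nonneg x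
  have hy : (0:ℤ) ≤ y := Int.ofNat_nonneg y
  unfold Gterm
  rw [Ib_neg (by omega), Ib_neg (by omega), Ib_neg (by omega), Ib_neg (by omega)]
  ring

lemma Gfun_eq_sum_big (x y m : ℕ) (h : ¬(x = 0 ∧ y = 0)) (K : ℕ)
    (hK : m / (2 * (x + y)) + 1 ≤ K) :
    Gfun x y m = ∑ n ∈ Finset.range K, Gterm x y m n := by
  rw [Gfun_eq_sum x y m h]
  refine Finset.sum_subset (Finset.range_subset_range.2 hK) fun n _ hn => ?_
  rw [Finset.mem_range, not_lt] at hn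
  exact Gterm_vanish h hn

lemma Gfun_symm (x y m : ℕ) : Gfun x y m = Gfun y x m := by
  unfold Gfun
  by_cases h : x = 0 ∧ y = 0
  · rw [if_pos h, if_pos ⟨h.2, h.1⟩]
  · rw [if_neg h, if_neg (by tauto)]
    have hr : y + x = x + y := by omega
    rw [hr]
    refine Finset.sum_congr rfl fun n _ => ?_
    have hc : ((y : ℤ) + x) = ((x : ℤ) + y) := by ring
    rw [hc]
    ring

lemma Gfun_zero_left (y m : ℕ) (hy : 1 ≤ y) : Gfun 0 y m = 1 := by
  rw [Gfun_eq_sum 0 y m (by omega)]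
  have hterm : ∀ n, Gterm 0 y m n =
      (fun k : ℕ => 2 * Ib ((m : ℤ) / 2 - (y : ℤ) * (k : ℤ)) (2 * ((m : ℤ) / 2) + 2).toNat) n
      - (fun k : ℕ => 2 * Ib ((m : ℤ) / 2 - (y : ℤ) * (k : ℤ)) (2 * ((m : ℤ) / 2) + 2).toNat) (n + 1) := by
    intro n
    unfold Gterm
    simp only [Nat.cast_zero, sub_zero, zero_add]
    have h1 : (m : ℤ) / 2 - y - (y : ℤ) * n = (m : ℤ) / 2 - (y : ℤ) * ((n + 1 : ℕ) : ℤ) := by push_cast; ring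
    rw [h1]
    ring
  rw [Finset.sum_congr rfl fun n _ => hterm n, Finset.sum_range_sub']
  have hvan : Ib ((m : ℤ) / 2 - (y : ℤ) * (↑(m / (2 * (0 + y)) + 1))) (2 * ((m : ℤ) / 2) + 2).toNat = 0 := by
    apply Ib_neg
    have hkey : m + 1 ≤ 2 * (0 + y) * (m / (2 * (0 + y)) + 1) := nat_div_key (by omega) le_rfl
    have hc : (m : ℤ) + 1 ≤ 2 * ((y : ℤ) * (↑(m / (2 * (0 + y)) + 1))) := by
      have : (m : ℤ) + 1 ≤ ((2 * (0 + y) * (m / (2 * (0 + y)) + 1) : ℕ) : ℤ) := by exact_mod_cast hkey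
      push_cast at this ⊢
      linarith
    set c : ℤ := (y : ℤ) * (↑(m / (2 * (0 + y)) + 1)) with hcdef
    omega
  rw [hvan]
  have htn : (2 * ((m : ℤ) / 2) + 2).toNat = 2 * ((m : ℕ) / 2) + 2 := by omega
  have harg : ((m : ℤ) / 2 - (y:ℤ) * (0:ℕ)) = (((m / 2 : ℕ) : ℤ)) := by push_cast; omega
  rw [harg, htn, Ib_half (m / 2)]
  norm_num

lemma Gfun_zero_right (x m : ℕ) (hx : 1 ≤ x) : Gfun x 0 m = 1 := by
  rw [Gfun_symm]; exact Gfun_zero_left x m hx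

lemma Gfun_base {x y : ℕ} (hx : 1 ≤ x) (hy : 1 ≤ y) : Gfun x y 0 = 0 := by
  rw [Gfun_eq_sum x y 0 (by omega)]
  refine Finset.sum_eq_zero fun n _ => ?_
  unfold Gterm
  have hxz : (1:ℤ) ≤ (x:ℤ) := by exact_mod_cast hx
  have hyz : (1:ℤ) ≤ (y:ℤ) := by exact_mod_cast hy
  have hnn : (0:ℤ) ≤ ((x:ℤ) + y) * n := by positivity
  rw [Ib_neg (by push_cast; omega), Ib_neg (by push_cast; omega),
      Ib_neg (by push_cast; omega), Ib_neg (by push_cast; omega)]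
  ring

lemma Gterm_rec {x y m : ℕ} (hx : 1 ≤ x) (hy : 1 ≤ y) (hm : 1 ≤ m) (n : ℕ) :
    Gterm x y m n = (Gterm (x+1) (y-1) (m-1) n + Gterm (x-1) (y+1) (m-1) n) / 2 := by
  obtain ⟨x', rfl⟩ : ∃ x', x = x' + 1 := ⟨x - 1, by omega⟩
  obtain ⟨y', rfl⟩ : ∃ y', y = y' + 1 := ⟨y - 1, by omega⟩
  obtain ⟨m', rfl⟩ : ∃ m', m = m' + 1 := ⟨m - 1, by omega⟩
  simp only [Nat.add_sub_cancel]
  unfold Gterm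
  -- canonical quantities
  set a : ℤ := ((m' : ℤ) + 1 - ((x' : ℤ) + 1)) / 2 with ha
  set b : ℤ := ((m' : ℤ) + 1 - ((y' : ℤ) + 1)) / 2 with hb
  set c : ℤ := (((x' : ℤ) + 1) + ((y' : ℤ) + 1)) * n with hc
  have hcast : ∀ k : ℕ, ((k : ℤ)) = (k : ℤ) := fun _ => rfl
  push_cast
  -- rewrite all divisions
  have e1 : ((m' : ℤ) + 1 - ((x' : ℤ) + 1)) / 2 = a := by rw [ha]
  have e2 : ((m' : ℤ) - ((x' : ℤ) + 1 + 1)) / 2 = a - 1 := by rw [ha]; omega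
  have e3 : ((m' : ℤ) - (x' : ℤ)) / 2 = a := by rw [ha]; omega
  have e4 : ((m' : ℤ) + 1 - ((y' : ℤ) + 1)) / 2 = b := by rw [hb]
  have e5 : ((m' : ℤ) - ((y' : ℤ) + 1 + 1)) / 2 = b - 1 := by rw [hb]; omega
  have e6 : ((m' : ℤ) - (y' : ℤ)) / 2 = b := by rw [hb]; omega
  have ec1 : ((x' : ℤ) + 1 + 1 + (y' : ℤ)) * n = c := by rw [hc]; ring
  have ec2 : ((x' : ℤ) + ((y' : ℤ) + 1 + 1)) * n = c := by rw [hc]; ring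
  have ec0 : (((x' : ℤ) + 1) + ((y' : ℤ) + 1)) * n = c := by rw [hc]
  rw [e1, e2, e3, e4, e5, e6, ec1, ec2, ec0]
  -- bounds for toNat arithmetic
  have hA : 1 ≤ 2 * a + (x' + 1) + 2 := by rw [ha]; omega
  have hB : 1 ≤ 2 * b + (y' + 1) + 2 := by rw [hb]; omega
  have tA : (2 * (a - 1) + ((x' : ℤ) + 1 + 1) + 2).toNat = (2 * a + ((x' : ℤ) + 1) + 2).toNat - 1 := by omega
  have tA2 : (2 * a + (x' : ℤ) + 2).toNat = (2 * a + ((x' : ℤ) + 1) + 2).toNat - 1 := by omega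
  have tB : (2 * (b - 1) + ((y' : ℤ) + 1 + 1) + 2).toNat = (2 * b + ((y' : ℤ) + 1) + 2).toNat - 1 := by omega
  have tB2 : (2 * b + (y' : ℤ) + 2).toNat = (2 * b + ((y' : ℤ) + 1) + 2).toNat - 1 := by omega
  rw [tA, tA2, tB, tB2]
  set A : ℕ := (2 * a + ((x' : ℤ) + 1) + 2).toNat with hAdef
  set B : ℕ := (2 * b + ((y' : ℤ) + 1) + 2).toNat with hBdef
  have hA1 : 1 ≤ A := by rw [hAdef]; omega
  have hB1 : 1 ≤ B := by rw [hBdef]; omega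
  -- apply Ib recursion to the four LHS terms
  rw [Ib_rec (a - c) A hA1, Ib_rec (a - ((y':ℤ)+1) - c) A hA1,
      Ib_rec (b - c) B hB1, Ib_rec (b - ((x':ℤ)+1) - c) B hB1]
  -- normalize arguments
  have f1 : a - c - 1 = a - 1 - c := by ring
  have f2 : a - ((y':ℤ)+1) - c - 1 = a - 1 - ((y':ℤ)+1) - c - 1 + 1 := by ring
  have g1 : a - 1 - (y':ℤ) - c = a - ((y':ℤ)+1) - c := by ring
  have g2 : b - ((x':ℤ)+1+1) - c = b - ((x':ℤ)+1) - c - 1 := by ring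
  have g3 : a - ((y':ℤ)+1+1) - c = a - ((y':ℤ)+1) - c - 1 := by ring
  have g4 : b - 1 - (x':ℤ) - c = b - ((x':ℤ)+1) - c := by ring
  have g5 : b - 1 - c = b - c - 1 := by ring
  rw [f1, g1, g2, g3, g4, g5]
  ring

lemma Gfun_rec {x y m : ℕ} (hx : 1 ≤ x) (hy : 1 ≤ y) (hm : 1 ≤ m) :
    Gfun x y m = (Gfun (x+1) (y-1) (m-1) + Gfun (x-1) (y+1) (m-1)) / 2 := by
  have hb1 : m / (2 * (x + y)) + 1 ≤ m + 1 := by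
    have := Nat.div_le_self m (2 * (x + y)); omega
  have hs1 : (x + 1) + (y - 1) = x + y := by omega
  have hs2 : (x - 1) + (y + 1) = x + y := by omega
  have hb2 : (m-1) / (2 * ((x+1) + (y-1))) + 1 ≤ m + 1 := by
    rw [hs1]; have := Nat.div_le_self (m-1) (2 * (x + y)); omega
  have hb3 : (m-1) / (2 * ((x-1) + (y+1))) + 1 ≤ m + 1 := by
    rw [hs2]; have := Nat.div_le_self (m-1) (2 * (x + y)); omega
  rw [Gfun_eq_sum_big x y m (by omega) (m+1) hb1,
      Gfun_eq_sum_big (x+1) (y-1) (m-1) (by omega) (m+1) hb2,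
      Gfun_eq_sum_big (x-1) (y+1) (m-1) (by omega) (m+1) hb3,
      ← Finset.sum_add_distrib]
  rw [Finset.sum_div]
  exact Finset.sum_congr rfl fun n _ => Gterm_rec hx hy hm n

lemma Gfun_boundary {x y m : ℕ} (h : x = 0 ∨ y = 0) : Gfun x y m = 1 := by
  rcases h with h | h
  · subst h
    rcases Nat.eq_zero_or_pos y with hy | hy
    · subst hy; unfold Gfun; rw [if_pos ⟨rfl, rfl⟩]
    · exact Gfun_zero_left y m hy
  · subst h
    rcases Nat.eq_zero_or_pos x with hx | hx
    · subst hx; unfold Gfun; rw [if_pos ⟨rfl, rfl⟩]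
    · exact Gfun_zero_right x m hx

lemma Gfun_nonneg : ∀ (m x y : ℕ), 0 ≤ Gfun x y m := by
  intro m
  induction m with
  | zero =>
    intro x y
    rcases Nat.eq_zero_or_pos x with hx | hx
    · rw [Gfun_boundary (Or.inl hx)]; norm_num
    rcases Nat.eq_zero_or_pos y with hy | hy
    · rw [Gfun_boundary (Or.inr hy)]; norm_num
    rw [Gfun_base hx hy]
  | succ m ih =>
    intro x y
    rcases Nat.eq_zero_or_pos x with hx | hx
    · rw [Gfun_boundary (Or.inl hx)]; norm_num
    rcases Nat.eq_zero_or_pos y with hy | hy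
    · rw [Gfun_boundary (Or.inr hy)]; norm_num
    rw [Gfun_rec hx hy (by omega)]
    have h1 := ih (x+1) (y-1)
    have h2 := ih (x-1) (y+1)
    simp only [Nat.add_sub_cancel] at *
    linarith

lemma Gfun_le_one : ∀ (m x y : ℕ), Gfun x y m ≤ 1 := by
  intro m
  induction m with
  | zero =>
    intro x y
    rcases Nat.eq_zero_or_pos x with hx | hx
    · rw [Gfun_boundary (Or.inl hx)]
    rcases Nat.eq_zero_or_pos y with hy | hy
    · rw [Gfun_boundary (Or.inr hy)]
    rw [Gfun_base hx hy]; norm_num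
  | succ m ih =>
    intro x y
    rcases Nat.eq_zero_or_pos x with hx | hx
    · rw [Gfun_boundary (Or.inl hx)]
    rcases Nat.eq_zero_or_pos y with hy | hy
    · rw [Gfun_boundary (Or.inr hy)]
    rw [Gfun_rec hx hy (by omega)]
    have h1 := ih (x+1) (y-1)
    have h2 := ih (x-1) (y+1)
    simp only [Nat.add_sub_cancel] at *
    linarith

lemma Gfun_mono : ∀ (m x y : ℕ), Gfun x y m ≤ Gfun x y (m+1) := by
  intro m
  induction m with
  | zero =>
    intro x y
    rcases Nat.eq_zero_or_pos x with hx | hx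
    · rw [Gfun_boundary (Or.inl hx), Gfun_boundary (Or.inl hx)]
    rcases Nat.eq_zero_or_pos y with hy | hy
    · rw [Gfun_boundary (Or.inr hy), Gfun_boundary (Or.inr hy)]
    rw [Gfun_base hx hy]
    exact Gfun_nonneg 1 x y
  | succ m ih =>
    intro x y
    rcases Nat.eq_zero_or_pos x with hx | hx
    · rw [Gfun_boundary (Or.inl hx), Gfun_boundary (Or.inl hx)]
    rcases Nat.eq_zero_or_pos y with hy | hy
    · rw [Gfun_boundary (Or.inr hy), Gfun_boundary (Or.inr hy)]
    rw [Gfun_rec hx hy (by omega), Gfun_rec hx hy (by omega)]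
    simp only [Nat.add_sub_cancel]
    have h1 := ih (x+1) (y-1)
    have h2 := ih (x-1) (y+1)
    linarith

lemma Gfun_convex {x y m : ℕ} (hx : 1 ≤ x) (hy : 1 ≤ y) :
    2 * Gfun x y m ≤ Gfun (x+1) (y-1) m + Gfun (x-1) (y+1) m := by
  have h := Gfun_rec hx hy (m := m + 1) (by omega)
  simp only [Nat.add_sub_cancel] at h
  have := Gfun_mono m x y
  linarith

/-- The piecewise-linear interpolation `H_{n,m}(t)` of the paper. -/
noncomputable def Hfun (n m : ℕ) (t : ℝ) : ℝ :=
  if (n : ℝ) ≤ |t| then 1 else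
    (1 - ((n : ℝ) + t) / 2 + (⌊((n : ℝ) + t) / 2⌋ : ℤ))
        * Gfun (⌊((n : ℝ) + t) / 2⌋).toNat (n - (⌊((n : ℝ) + t) / 2⌋).toNat) m
    + (((n : ℝ) + t) / 2 - (⌊((n : ℝ) + t) / 2⌋ : ℤ))
        * Gfun ((⌊((n : ℝ) + t) / 2⌋).toNat + 1) (n - (⌊((n : ℝ) + t) / 2⌋).toNat - 1) m

/-- extended node values -/
noncomputable def gam (n m : ℕ) (j : ℤ) : ℝ :=
  if j ≤ 0 ∨ (n : ℤ) ≤ j then 1 else Gfun j.toNat (n - j.toNat) m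

/-- piecewise linear interpolation of `gam` -/
noncomputable def Pfun (n m : ℕ) (s : ℝ) : ℝ :=
  (1 - (s - (⌊s⌋ : ℤ))) * gam n m ⌊s⌋ + (s - (⌊s⌋ : ℤ)) * gam n m (⌊s⌋ + 1)

lemma gam_nonneg (n m : ℕ) (j : ℤ) : 0 ≤ gam n m j := by
  unfold gam; split
  · norm_num
  · exact Gfun_nonneg _ _ _

lemma gam_le_one (n m : ℕ) (j : ℤ) : gam n m j ≤ 1 := by
  unfold gam; split
  · exact le_refl 1
  · exact Gfun_le_one _ _ _

lemma gam_eq_Gfun {n : ℕ} (m : ℕ) {j : ℤ} (h0 : 0 ≤ j) (hn : j ≤ (n : ℤ)) :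
    gam n m j = Gfun j.toNat (n - j.toNat) m := by
  unfold gam
  rcases eq_or_lt_of_le h0 with h | h
  · rw [if_pos (Or.inl h.symm.le)]
    have : j.toNat = 0 := by omega
    rw [this, Gfun_boundary (Or.inl rfl)]
  rcases eq_or_lt_of_le hn with h2 | h2
  · rw [if_pos (Or.inr h2.symm.le)]
    have h3 : n - j.toNat = 0 := by omega
    rw [h3, Gfun_boundary (Or.inr rfl)]
  · rw [if_neg (by omega)]

lemma gam_rec {n m : ℕ} {j : ℤ} (hm : 1 ≤ m) (h1 : 1 ≤ j) (h2 : j + 1 ≤ (n : ℤ)) :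
    gam n m j = (gam n (m-1) (j-1) + gam n (m-1) (j+1)) / 2 := by
  rw [gam_eq_Gfun m (by omega) (by omega),
      gam_eq_Gfun (m-1) (j := j - 1) (by omega) (by omega),
      gam_eq_Gfun (m-1) (j := j + 1) (by omega) (by omega)]
  have hx : 1 ≤ j.toNat := by omega
  have hy : 1 ≤ n - j.toNat := by omega
  rw [Gfun_rec hx hy hm]
  have e1 : (j - 1).toNat = j.toNat - 1 := by omega
  have e2 : (j + 1).toNat = j.toNat + 1 := by omega
  rw [e1, e2]
  have e3 : n - (j.toNat - 1) = (n - j.toNat) + 1 := by omega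
  have e4 : n - (j.toNat + 1) = (n - j.toNat) - 1 := by omega
  rw [e3, e4]
  ring

lemma gam_convex {n m : ℕ} {j : ℤ} (h1 : 1 ≤ j) (h2 : j + 1 ≤ (n : ℤ)) :
    2 * gam n m j ≤ gam n m (j-1) + gam n m (j+1) := by
  rw [gam_eq_Gfun m (by omega) (by omega),
      gam_eq_Gfun m (j := j - 1) (by omega) (by omega),
      gam_eq_Gfun m (j := j + 1) (by omega) (by omega)]
  have hx : 1 ≤ j.toNat := by omega
  have hy : 1 ≤ n - j.toNat := by omega
  have := Gfun_convex (x := j.toNat) (y := n - j.toNat) (m := m) hx hy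
  have e1 : (j - 1).toNat = j.toNat - 1 := by omega
  have e2 : (j + 1).toNat = j.toNat + 1 := by omega
  rw [e1, e2]
  have e3 : n - (j.toNat - 1) = (n - j.toNat) + 1 := by omega
  have e4 : n - (j.toNat + 1) = (n - j.toNat) - 1 := by omega
  rw [e3, e4]
  linarith

lemma gam_one_left {n m : ℕ} {j : ℤ} (h : j ≤ 0) : gam n m j = 1 := by
  unfold gam; rw [if_pos (Or.inl h)]

lemma gam_one_right {n m : ℕ} {j : ℤ} (h : (n:ℤ) ≤ j) : gam n m j = 1 := by
  unfold gam; rw [if_pos (Or.inr h)]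

lemma Pfun_int (n m : ℕ) (j : ℤ) : Pfun n m (j : ℝ) = gam n m j := by
  unfold Pfun
  rw [Int.floor_intCast]
  ring

lemma Pfun_le_one (n m : ℕ) (s : ℝ) : Pfun n m s ≤ 1 := by
  unfold Pfun
  have h1 := Int.floor_le s
  have h2 := Int.lt_floor_add_one s
  have g1 := gam_le_one n m ⌊s⌋
  have g2 := gam_le_one n m (⌊s⌋ + 1)
  have g3 := gam_nonneg n m ⌊s⌋
  have g4 := gam_nonneg n m (⌊s⌋ + 1)
  nlinarith

lemma Pfun_nonneg (n m : ℕ) (s : ℝ) : 0 ≤ Pfun n m s := by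
  unfold Pfun
  have h1 := Int.floor_le s
  have h2 := Int.lt_floor_add_one s
  have g3 := gam_nonneg n m ⌊s⌋
  have g4 := gam_nonneg n m (⌊s⌋ + 1)
  nlinarith

lemma Pfun_affine_on_cell {n m : ℕ} {j : ℤ} {s : ℝ} (h1 : (j : ℝ) ≤ s) (h2 : s ≤ (j : ℝ) + 1) :
    Pfun n m s = gam n m j + (s - (j : ℝ)) * (gam n m (j+1) - gam n m j) := by
  rcases lt_or_eq_of_le h2 with h | h
  · have hf : ⌊s⌋ = j := by
      rw [Int.floor_eq_iff]
      constructor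
      · exact_mod_cast h1
      · exact_mod_cast h
    unfold Pfun
    rw [hf]
    ring
  · rw [h]
    have : (j : ℝ) + 1 = ((j + 1 : ℤ) : ℝ) := by push_cast; ring
    rw [this, Pfun_int]
    push_cast
    ring

lemma Pfun_eq_one {n m : ℕ} {s : ℝ} (h : s ≤ 0 ∨ (n : ℝ) ≤ s) : Pfun n m s = 1 := by
  unfold Pfun
  rcases h with h | h
  · rcases lt_or_eq_of_le h with h' | h'
    · have hf : ⌊s⌋ ≤ -1 := by
        have : ⌊s⌋ < 0 := Int.floor_lt.2 (by exact_mod_cast h')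
        omega
      rw [gam_one_left (by omega), gam_one_left (by omega)]
      ring
    · subst h'
      have hf : ⌊(0:ℝ)⌋ = 0 := by norm_num
      rw [hf, gam_one_left le_rfl]
      norm_num
  · have hf : (n : ℤ) ≤ ⌊s⌋ := by
      rw [Int.le_floor]; exact_mod_cast h
    rw [gam_one_right hf, gam_one_right (by omega)]
    ring

/-- Bridge: Hfun is Pfun at `u = (n+t)/2`. -/
lemma Hfun_eq_Pfun (n m : ℕ) (hn : 1 ≤ n) (t : ℝ) :
    Hfun n m t = Pfun n m (((n : ℝ) + t) / 2) := by
  set u : ℝ := ((n : ℝ) + t) / 2 with hu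
  unfold Hfun
  by_cases h : (n : ℝ) ≤ |t|
  · rw [if_pos h]
    rcases le_or_gt ((n:ℝ)) t with ht | ht
    · exact (Pfun_eq_one (Or.inr (by rw [hu]; push_cast; linarith))).symm
    · have ht' : t ≤ -(n:ℝ) := by
        rcases abs_cases t with ⟨he, _⟩ | ⟨he, _⟩
        · rw [he] at h; linarith
        · rw [he] at h; linarith
      exact (Pfun_eq_one (Or.inl (by rw [hu]; push_cast; linarith))).symm
  · rw [if_neg h]
    push_neg at h
    have habs := abs_lt.mp h
    have hu0 : 0 < u := by rw [hu]; push_cast; linarith [habs.1]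
    have hun : u < n := by rw [hu]; push_cast; linarith [habs.2]
    have hz0 : 0 ≤ ⌊u⌋ := Int.floor_nonneg.2 hu0.le
    have hflt : ⌊u⌋ < (n:ℤ) := Int.floor_lt.2 (by exact_mod_cast hun)
    have hzn : ⌊u⌋ ≤ (n : ℤ) := hflt.le
    unfold Pfun
    rw [gam_eq_Gfun m hz0 hzn, gam_eq_Gfun m (by omega) (by omega)]
    have e2 : (⌊u⌋ + 1).toNat = ⌊u⌋.toNat + 1 := by omega
    rw [e2]
    have e4 : n - (⌊u⌋.toNat + 1) = n - ⌊u⌋.toNat - 1 := by omega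
    rw [e4, ← hu]
    ring

lemma cell_bound {n m : ℕ} (j : ℤ) {s s1 s2 p q : ℝ}
    (hj1 : (j : ℝ) ≤ s1) (hj2 : s2 ≤ (j : ℝ) + 1) (h1 : s1 ≤ s) (h2 : s ≤ s2)
    (hlt : s1 < s2)
    (hb1 : Pfun n m s1 ≤ p + q * s1) (hb2 : Pfun n m s2 ≤ p + q * s2) :
    Pfun n m s ≤ p + q * s := by
  rw [Pfun_affine_on_cell (j := j) (by linarith) (by linarith)] at hb1
  rw [Pfun_affine_on_cell (j := j) (by linarith) (by linarith)] at hb2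
  rw [Pfun_affine_on_cell (j := j) (by linarith) (by linarith)]
  set a := gam n m j
  set d := gam n m (j+1) - gam n m j
  nlinarith [mul_nonneg (by linarith : (0:ℝ) ≤ s2 - s)
      (by linarith : (0:ℝ) ≤ p + q * s1 - (a + (s1 - (j:ℝ)) * d)),
    mul_nonneg (by linarith : (0:ℝ) ≤ s - s1)
      (by linarith : (0:ℝ) ≤ p + q * s2 - (a + (s2 - (j:ℝ)) * d))]

lemma Pfun_cast_add_one (n m : ℕ) (j : ℤ) : Pfun n m ((j:ℝ) + 1) = gam n m (j + 1) := by
  have : ((j:ℝ) + 1) = ((j + 1 : ℤ) : ℝ) := by push_cast; ring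
  rw [this, Pfun_int]

lemma chord_mid1 {a b c e lam : ℝ} (h0 : 0 ≤ lam) (h1 : lam ≤ 1) (hA : 2*b ≤ a + c) (hB : 2*c ≤ b + e) :
    b ≤ a + lam*(b-a) + (1-lam)*((c + lam*(e-c) - (a + lam*(b-a)))/2) := by
  nlinarith [mul_nonneg (by linarith : (0:ℝ) ≤ 1 - lam) (by linarith : (0:ℝ) ≤ a + c - 2*b),
    mul_nonneg (mul_nonneg (by linarith : (0:ℝ) ≤ 1 - lam) h0) (by linarith : (0:ℝ) ≤ a - b - c + e)]

lemma chord_mid2 {a b c e lam : ℝ} (h0 : 0 ≤ lam) (h1 : lam ≤ 1) (hA : 2*b ≤ a + c) (hB : 2*c ≤ b + e) :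
    c ≤ a + lam*(b-a) + (2-lam)*((c + lam*(e-c) - (a + lam*(b-a)))/2) := by
  nlinarith [mul_nonneg h0 (by linarith : (0:ℝ) ≤ b + e - 2*c),
    mul_nonneg (mul_nonneg h0 (by linarith : (0:ℝ) ≤ 1 - lam)) (by linarith : (0:ℝ) ≤ a - b - c + e)]

set_option maxHeartbeats 2000000 in
lemma pointwise_bound (n m : ℕ) (hn : 1 ≤ n) (hm : 1 ≤ m) (u : ℝ) :
    ∃ p q : ℝ, (∀ s : ℝ, u - 1 ≤ s → s ≤ u + 1 → Pfun n (m-1) s ≤ p + q * s) ∧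
      p + q * u ≤ Pfun n m u := by
  by_cases hA : u ≤ 0 ∨ (n : ℝ) ≤ u
  · exact ⟨1, 0, fun s _ _ => by simpa using Pfun_le_one n (m-1) s,
      by rw [Pfun_eq_one hA]; norm_num⟩
  push_neg at hA
  obtain ⟨hu0, hun⟩ := hA
  rcases eq_or_lt_of_le hn with hn1 | hn2
  · -- n = 1 : everything is 1
    have hone : ∀ (m' : ℕ) (s : ℝ), Pfun n m' s = 1 := by
      intro m' s
      unfold Pfun
      have h1 : gam n m' ⌊s⌋ = 1 := by
        rcases le_or_gt ⌊s⌋ 0 with h | h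
        · exact gam_one_left h
        · exact gam_one_right (by omega)
      have h2 : gam n m' (⌊s⌋ + 1) = 1 := by
        rcases le_or_gt (⌊s⌋ + 1) 0 with h | h
        · exact gam_one_left h
        · exact gam_one_right (by omega)
      rw [h1, h2]; ring
    exact ⟨1, 0, fun s _ _ => by rw [hone]; norm_num, by rw [hone]; norm_num⟩
  have hn2' : 2 ≤ n := hn2
  obtain ⟨z, hz⟩ : ∃ z : ℤ, ⌊u⌋ = z := ⟨⌊u⌋, rfl⟩
  have hz0 : 0 ≤ z := hz ▸ Int.floor_nonneg.2 hu0.le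
  have hzlt : z < (n : ℤ) := hz ▸ Int.floor_lt.2 (by exact_mod_cast hun)
  have hzle : (z : ℝ) ≤ u := hz ▸ Int.floor_le u
  have hzlt1 : u < (z : ℝ) + 1 := hz ▸ Int.lt_floor_add_one u
  by_cases hlam : u = (z : ℝ)
  · -- λ = 0 : u is an integer node, 1 ≤ z ≤ n-1
    have hz1 : 1 ≤ z := by
      rcases eq_or_lt_of_le hz0 with h | h
      · exfalso; rw [hlam, ← h] at hu0; norm_num at hu0
      · omega
    set a := gam n (m-1) (z-1) with ha
    set b := gam n (m-1) z with hb
    set c := gam n (m-1) (z+1) with hc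
    have hconv : 2 * b ≤ a + c := gam_convex hz1 (by omega)
    refine ⟨a - ((z:ℝ) - 1) * ((c - a)/2), (c - a)/2, ?_, ?_⟩
    · intro s hs1 hs2
      have e1 : Pfun n (m-1) ((z:ℝ) - 1) = a := by
        have : ((z:ℝ) - 1) = ((z - 1 : ℤ) : ℝ) := by push_cast; ring
        rw [this, Pfun_int, ← ha]
      have e2 : Pfun n (m-1) ((z:ℝ)) = b := by rw [Pfun_int, ← hb]
      have e3 : Pfun n (m-1) ((z:ℝ) + 1) = c := by rw [Pfun_cast_add_one, ← hc]
      rcases le_or_gt s (z:ℝ) with hcase | hcase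
      · refine cell_bound (z - 1) (s1 := (z:ℝ) - 1) (s2 := (z:ℝ))
          (by push_cast; linarith) (by push_cast; linarith)
          (by rw [hlam] at hs1; linarith) hcase (by linarith) ?_ ?_
        · rw [e1]; apply le_of_eq; ring
        · rw [e2]; nlinarith
      · refine cell_bound z (s1 := (z:ℝ)) (s2 := (z:ℝ) + 1)
          le_rfl le_rfl hcase.le (by rw [hlam] at hs2; linarith) (by linarith) ?_ ?_
        · rw [e2]; nlinarith
        · rw [e3]; apply le_of_eq; ring
    · have hrec : gam n m z = (a + c) / 2 := gam_rec hm hz1 (by omega)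
      rw [hlam, Pfun_int, hrec]
      apply le_of_eq; ring
  have hlam' : (z : ℝ) < u := lt_of_le_of_ne hzle (by intro h; exact hlam h.symm)
  by_cases hzz : z = 0
  · -- case (d): u ∈ (0,1)
    subst hzz
    have hu1 : u < 1 := by
      have := hzlt1; norm_num at this; linarith
    set c := gam n (m-1) 1 with hc
    set e := gam n (m-1) 2 with he
    have hg0 : gam n (m-1) 0 = 1 := gam_one_left le_rfl
    have hconv : 2 * c ≤ 1 + e := by
      have h := gam_convex (n := n) (m := m-1) (j := 1) le_rfl (by omega)
      rw [show (1:ℤ) - 1 = 0 from rfl, hg0, show (1:ℤ) + 1 = 2 from rfl, ← he, ← hc] at h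
      linarith
    have hc1 : c ≤ 1 := gam_le_one n (m-1) 1
    have he1 : e ≤ 1 := gam_le_one n (m-1) 2
    have hc0 : 0 ≤ c := gam_nonneg n (m-1) 1
    have he0 : 0 ≤ e := gam_nonneg n (m-1) 2
    have hPp1 : Pfun n (m-1) (u + 1) = c + u * (e - c) := by
      rw [Pfun_affine_on_cell (j := 1) (by push_cast; linarith) (by push_cast; linarith),
        show (1:ℤ) + 1 = 2 from rfl, ← hc, ← he]
      push_cast
      ring
    set k : ℝ := (1 - (c + u * (e - c))) / (1 + u) with hk
    have hden : 0 < 1 + u := by linarith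
    have hden' : (1 + u) ≠ 0 := ne_of_gt hden
    have hk0 : 0 ≤ k := by
      apply div_nonneg _ hden.le
      nlinarith [mul_nonneg (by linarith : (0:ℝ) ≤ 1 - u) (by linarith : (0:ℝ) ≤ 1 - c),
        mul_nonneg hu0.le (by linarith : (0:ℝ) ≤ 1 - e)]
    have hkc : k ≤ 1 - c := by
      rw [hk, div_le_iff₀ hden]
      nlinarith [mul_nonneg hu0.le (by linarith : (0:ℝ) ≤ 1 + e - 2*c)]
    have hLp1 : 1 + (-k) * (u + 1) = c + u * (e - c) := by
      rw [hk]; field_simp; ring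
    refine ⟨1, -k, ?_, ?_⟩
    · intro s hs1 hs2
      rcases le_or_gt s 0 with hcase | hcase
      · rw [Pfun_eq_one (Or.inl hcase)]
        nlinarith
      rcases le_or_gt s 1 with hcase2 | hcase2
      · refine cell_bound 0 (s1 := (0:ℝ)) (s2 := (1:ℝ)) (by norm_num) (by norm_num)
          hcase.le hcase2 (by norm_num) ?_ ?_
        · have h0 : Pfun n (m-1) ((0:ℝ)) = 1 := by
            rw [show ((0:ℝ)) = ((0 : ℤ) : ℝ) by norm_num, Pfun_int, hg0]
          rw [h0]; nlinarith
        · have h1 : Pfun n (m-1) ((1:ℝ)) = c := by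
            rw [show ((1:ℝ)) = ((1 : ℤ) : ℝ) by norm_num, Pfun_int, ← hc]
          rw [h1]; nlinarith
      · refine cell_bound 1 (s1 := (1:ℝ)) (s2 := u + 1) (by norm_num) (by push_cast; linarith)
          hcase2.le hs2 (by linarith) ?_ ?_
        · have h1 : Pfun n (m-1) ((1:ℝ)) = c := by
            rw [show ((1:ℝ)) = ((1 : ℤ) : ℝ) by norm_num, Pfun_int, ← hc]
          rw [h1]; nlinarith
        · rw [hPp1, hLp1]
    · -- 1 - k * u ≤ Pfun n m u
      have hPm : Pfun n m u = 1 + u * (gam n m 1 - 1) := by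
        rw [Pfun_affine_on_cell (j := 0) (by push_cast; linarith) (by push_cast; linarith)]
        rw [show (0:ℤ) + 1 = 1 from rfl, gam_one_left (le_refl (0:ℤ))]
        push_cast; ring
      have hrec : gam n m 1 = (1 + e) / 2 := by
        have h := gam_rec (n := n) (m := m) (j := 1) hm le_rfl (by omega)
        rw [show (1:ℤ) - 1 = 0 from rfl, gam_one_left le_rfl,
          show (1:ℤ) + 1 = 2 from rfl, ← he] at h
        exact h
      rw [hPm, hrec]
      have hkey : (1 - e)/2 ≤ k := by
        rw [hk, le_div_iff₀ hden]
        nlinarith [mul_nonneg (by linarith : (0:ℝ) ≤ 1 - u) (by linarith : (0:ℝ) ≤ 1 + e - 2*c)]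
      nlinarith
  by_cases hzn : z = (n : ℤ) - 1
  · -- case (c): u ∈ (n-1, n)
    set a := gam n (m-1) (z-1) with ha
    set b := gam n (m-1) z with hb
    have hz1 : 1 ≤ z := by omega
    have hgn : gam n (m-1) (z+1) = 1 := gam_one_right (by omega)
    have hgmn : gam n m (z+1) = 1 := gam_one_right (by omega)
    have hconv : 2 * b ≤ a + 1 := by
      have h := gam_convex (n := n) (m := m-1) (j := z) hz1 (by omega)
      rw [hgn, ← ha, ← hb] at h
      linarith
    have ha1 : a ≤ 1 := gam_le_one _ _ _
    have hb1 : b ≤ 1 := gam_le_one _ _ _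
    have ha0 : 0 ≤ a := gam_nonneg _ _ _
    have hb0 : 0 ≤ b := gam_nonneg _ _ _
    set lam : ℝ := u - (z:ℝ) with hlamdef
    have hlampos : 0 < lam := by rw [hlamdef]; linarith
    have hlamlt : lam < 1 := by rw [hlamdef]; linarith
    have hzr : (z : ℝ) = (n : ℝ) - 1 := by
      have h' : ((z:ℤ) : ℝ) = (((n:ℤ) - 1 : ℤ) : ℝ) := by rw [hzn]
      push_cast at h'; linarith
    have hnval : (n:ℝ) = u - lam + 1 := by rw [hlamdef]; rw [hzr] at *; ring_nf
    have hPm1 : Pfun n (m-1) (u - 1) = a + lam * (b - a) := by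
      rw [Pfun_affine_on_cell (j := z - 1) (by push_cast; linarith) (by push_cast; linarith),
        show z - 1 + 1 = z by ring, ← ha, ← hb]
      push_cast
      rw [hlamdef]
      ring
    set k : ℝ := (1 - (a + lam * (b - a))) / (2 - lam) with hk
    have hden : 0 < 2 - lam := by linarith
    have hden' : (2 - lam) ≠ 0 := ne_of_gt hden
    have hk0 : 0 ≤ k := by
      apply div_nonneg _ hden.le
      nlinarith [mul_nonneg (by linarith : (0:ℝ) ≤ 1 - lam) (by linarith : (0:ℝ) ≤ 1 - a),
        mul_nonneg hlampos.le (by linarith : (0:ℝ) ≤ 1 - b)]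
    have hkb : k ≤ 1 - b := by
      rw [hk, div_le_iff₀ hden]
      nlinarith [mul_nonneg (by linarith : (0:ℝ) ≤ 1 - lam) (by linarith : (0:ℝ) ≤ a + 1 - 2*b)]
    refine ⟨1 - (n:ℝ) * k, k, ?_, ?_⟩
    · intro s hs1 hs2
      have hLn : ∀ s' : ℝ, 1 - (n:ℝ) * k + k * s' = 1 + (s' - (n:ℝ)) * k := by intro s'; ring
      rcases le_or_gt ((n:ℝ)) s with hcase | hcase
      · rw [Pfun_eq_one (Or.inr hcase), hLn]
        nlinarith
      rcases le_or_gt s (z:ℝ) with hcase2 | hcase2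
      · -- s ∈ [u-1, z] : cell z-1
        refine cell_bound (z - 1) (s1 := u - 1) (s2 := (z:ℝ))
          (by push_cast; linarith) (by push_cast; linarith)
          hs1 hcase2 (by linarith) ?_ ?_
        · rw [hPm1, hLn]
          have hLm1 : 1 + ((u - 1) - (n:ℝ)) * k = a + lam * (b - a) := by
            rw [hk, hnval]; field_simp; ring
          rw [hLm1]
        · rw [Pfun_int, ← hb, hLn]
          have : ((z:ℝ)) - (n:ℝ) = -1 := by rw [hzr]; ring
          rw [this]
          linarith
      · -- s ∈ [z, n] : cell z
        refine cell_bound z (s1 := (z:ℝ)) (s2 := (n:ℝ))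
          le_rfl (by rw [hzr]; linarith) hcase2.le hcase.le (by linarith) ?_ ?_
        · rw [Pfun_int, ← hb, hLn]
          have : ((z:ℝ)) - (n:ℝ) = -1 := by rw [hzr]; ring
          rw [this]
          linarith
        · have hP1 : Pfun n (m-1) ((n:ℝ)) = 1 := Pfun_eq_one (Or.inr le_rfl)
          rw [hP1, hLn]
          nlinarith
    · -- final bound
      have hPmu : Pfun n m u = gam n m z + lam * (1 - gam n m z) := by
        rw [Pfun_affine_on_cell (j := z) hzle hzlt1.le, hgmn, hlamdef]
      have hrec : gam n m z = (a + 1) / 2 := by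
        have h := gam_rec (n := n) (m := m) (j := z) hm hz1 (by omega)
        rw [hgn, ← ha] at h
        exact h
      rw [hPmu, hrec]
      have hkey : (1 - a)/2 ≤ k := by
        rw [hk, le_div_iff₀ hden]
        nlinarith [mul_nonneg hlampos.le (by linarith : (0:ℝ) ≤ a + 1 - 2*b)]
      have hfin : 1 - (n:ℝ) * k + k * u = 1 - (1 - lam) * k := by
        rw [hnval]; ring
      rw [hfin]
      have h2 : (1 - lam) * ((1 - a)/2) ≤ (1 - lam) * k :=
        mul_le_mul_of_nonneg_left hkey (by linarith)
      nlinarith [h2]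
  · -- case (b2): 1 ≤ z ≤ n-2, λ ∈ (0,1)
    have hz1 : 1 ≤ z := by omega
    have hz2 : z + 2 ≤ (n:ℤ) := by omega
    set a := gam n (m-1) (z-1) with ha
    set b := gam n (m-1) z with hb
    set c := gam n (m-1) (z+1) with hc
    set e := gam n (m-1) (z+2) with he
    have hconv1 : 2 * b ≤ a + c := gam_convex hz1 (by omega)
    have hconv2 : 2 * c ≤ b + e := by
      have h := gam_convex (n := n) (m := m-1) (j := z+1) (by omega) (by omega)
      rw [show z + 1 - 1 = z by ring, show z + 1 + 1 = z + 2 by ring, ← hb, ← he, ← hc] at h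
      linarith
    set lam : ℝ := u - (z:ℝ) with hlamdef
    have hlampos : 0 < lam := by rw [hlamdef]; linarith
    have hlamlt : lam < 1 := by rw [hlamdef]; linarith
    have hPm1 : Pfun n (m-1) (u - 1) = a + lam * (b - a) := by
      rw [Pfun_affine_on_cell (j := z - 1) (by push_cast; linarith) (by push_cast; linarith),
        show z - 1 + 1 = z by ring, ← ha, ← hb]
      push_cast
      rw [hlamdef]
      ring
    have hPp1 : Pfun n (m-1) (u + 1) = c + lam * (e - c) := by
      rw [Pfun_affine_on_cell (j := z + 1) (by push_cast; linarith) (by push_cast; linarith),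
        show z + 1 + 1 = z + 2 by ring, ← hc, ← he]
      push_cast
      rw [hlamdef]
      ring
    set Pm1 : ℝ := a + lam * (b - a) with hPm1d
    set Pp1 : ℝ := c + lam * (e - c) with hPp1d
    set q : ℝ := (Pp1 - Pm1) / 2 with hq
    refine ⟨Pm1 - (u - 1) * q, q, ?_, ?_⟩
    · intro s hs1 hs2
      have hbz : Pfun n (m-1) ((z:ℝ)) ≤ Pm1 - (u-1) * q + q * (z:ℝ) := by
        rw [Pfun_int, ← hb]
        have hLz : Pm1 - (u-1) * q + q * (z:ℝ) = Pm1 + (1 - lam) * q := by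
          rw [hlamdef]; ring
        rw [hLz, hq, hPm1d, hPp1d]
        exact chord_mid1 hlampos.le hlamlt.le hconv1 hconv2
      have hbz1 : Pfun n (m-1) ((z:ℝ)+1) ≤ Pm1 - (u-1) * q + q * ((z:ℝ)+1) := by
        rw [Pfun_cast_add_one, ← hc]
        have hLz1 : Pm1 - (u-1) * q + q * ((z:ℝ)+1) = Pm1 + (2 - lam) * q := by
          rw [hlamdef]; ring
        rw [hLz1, hq, hPm1d, hPp1d]
        exact chord_mid2 hlampos.le hlamlt.le hconv1 hconv2
      have hbm1 : Pfun n (m-1) (u - 1) ≤ Pm1 - (u-1) * q + q * (u - 1) := by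
        rw [hPm1]; apply le_of_eq; ring
      have hbp1 : Pfun n (m-1) (u + 1) ≤ Pm1 - (u-1) * q + q * (u + 1) := by
        rw [hPp1, hq]; apply le_of_eq; ring
      rcases le_or_gt s (z:ℝ) with hcase | hcase
      · exact cell_bound (z-1) (s1 := u - 1) (s2 := (z:ℝ))
          (by push_cast; linarith) (by push_cast; linarith) hs1 hcase
          (by linarith) hbm1 hbz
      rcases le_or_gt s ((z:ℝ)+1) with hcase2 | hcase2
      · exact cell_bound z (s1 := (z:ℝ)) (s2 := (z:ℝ)+1)
          le_rfl le_rfl hcase.le hcase2 (by linarith) hbz hbz1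
      · exact cell_bound (z+1) (s1 := (z:ℝ)+1) (s2 := u+1)
          (by push_cast; linarith) (by push_cast; linarith) hcase2.le hs2
          (by linarith) hbz1 hbp1
    · have hrec1 : gam n m z = (a + c) / 2 := gam_rec hm hz1 (by omega)
      have hrec2 : gam n m (z+1) = (b + e) / 2 := by
        have h := gam_rec (n := n) (m := m) (j := z+1) hm (by omega) (by omega)
        rw [show z + 1 - 1 = z by ring, show z + 1 + 1 = z + 2 by ring, ← hb, ← he] at h
        exact h
      have hPmu : Pfun n m u = gam n m z + lam * (gam n m (z+1) - gam n m z) := by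
        rw [Pfun_affine_on_cell (j := z) hzle hzlt1.le, hlamdef]
      rw [hPmu, hrec1, hrec2, hq, hPm1d, hPp1d]
      apply le_of_eq; ring

theorem expectation_H_le_H
    {Ω : Type*} {m0 : MeasurableSpace Ω} {μ : Measure Ω} [IsProbabilityMeasure μ]
    (n m : ℕ) (hm : 1 ≤ m) (t : ℝ) (Z : Ω → ℝ) (hZmeas : Measurable Z)
    (hZmean : ∫ ω, Z ω ∂μ = 0) (hZbdd : ∀ᵐ ω ∂μ, |Z ω| ≤ 1) :
    ∫ ω, Hfun n (m - 1) (t - 2 * Z ω) ∂μ ≤ Hfun n m t := by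
  rcases Nat.eq_zero_or_pos n with hn0 | hn
  · subst hn0
    have hone : ∀ (m' : ℕ) (s : ℝ), Hfun 0 m' s = 1 := by
      intro m' s
      unfold Hfun
      rw [if_pos (by simpa using abs_nonneg s)]
    simp only [hone]
    simp
  · set u : ℝ := ((n : ℝ) + t) / 2 with hu
    obtain ⟨p, q, hpt, hfin⟩ := pointwise_bound n m hn hm u
    have hHb : ∀ z : ℝ, |z| ≤ 1 → Hfun n (m-1) (t - 2*z) ≤ (p + q*u) + (-q) * z := by
      intro z hz
      rw [Hfun_eq_Pfun n (m-1) hn]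
      have harg : ((n:ℝ) + (t - 2*z))/2 = u - z := by rw [hu]; ring
      rw [harg]
      obtain ⟨hz1, hz2⟩ := abs_le.mp hz
      have h := hpt (u - z) (by linarith) (by linarith)
      linarith
    by_cases hInt : Integrable (fun ω => Hfun n (m-1) (t - 2*Z ω)) μ
    · have hZint : Integrable Z μ :=
        (integrable_const (1:ℝ)).mono' hZmeas.aestronglyMeasurable
          (by simpa [Real.norm_eq_abs] using hZbdd)
      have hgint : Integrable (fun ω => (p + q*u) + (-q) * Z ω) μ :=
        (integrable_const _).add (hZint.const_mul _)
      have hmono := integral_mono_ae hInt hgint (hZbdd.mono fun ω hω => hHb (Z ω) hω)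
      have heval : ∫ ω, ((p + q*u) + (-q) * Z ω) ∂μ = p + q*u := by
        rw [integral_add (integrable_const _) (hZint.const_mul _), integral_const,
          MeasureTheory.integral_const_mul, hZmean]
        simp
      rw [heval] at hmono
      refine hmono.trans ?_
      rw [Hfun_eq_Pfun n m hn]
      exact hfin
    · rw [integral_undef hInt, Hfun_eq_Pfun n m hn]
      exact Pfun_nonneg n m u
end

section
/- For every integer m ≥ 1 and every integer n, I_b(n, m) + I_b(n-1, m) = 2·I_b(n, m+1). -/
open MeasureTheory Filter

theorem Ib_pascal (m : ℕ) (hm : 1 ≤ m) (n : ℤ) :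
    Ib n m + Ib (n - 1) m = 2 * Ib n (m + 1) := by
  rcases lt_or_ge n 0 with hn | hn
  · have h1 : (n + 1).toNat = 0 := Int.toNat_of_nonpos (by omega)
    have h2 : n.toNat = 0 := Int.toNat_of_nonpos (by omega)
    simp [Ib, h1, h2]
  · obtain ⟨k, rfl⟩ := Int.eq_ofNat_of_zero_le hn
    have h1 : ((k : ℤ) + 1).toNat = k + 1 := by omega
    have h2 : ((k : ℤ) - 1 + 1).toNat = k := by omega
    have h3 : ((k : ℤ)).toNat = k := by omega
    have h4 : ((k : ℤ) - 1).toNat = k - 1 := by omega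
    simp only [Ib, h1, h2, h3, h4]
    rw [Finset.sum_range_succ' (fun z => ((1 + (-1 : ℝ) ^ (k - z)) / 2 ^ m) * (m.choose z)),
        Finset.sum_range_succ' (fun z => ((1 + (-1 : ℝ) ^ (k - z)) / 2 ^ (m+1)) * ((m+1).choose z))]
    rw [add_right_comm, mul_add, Finset.mul_sum, ← Finset.sum_add_distrib]
    congr 1
    · apply Finset.sum_congr rfl
      intro i _
      have h5 : k - 1 - i = k - (i + 1) := by omega
      rw [h5, Nat.choose_succ_succ]
      push_cast
      ring
    · simp
      ring
end
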